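/- arXiv:2512.03141 — 2 statements merged into one kernel-verified Lean document; each statement's English description precedes it below -/
import Mathlib

section
/- For any quaternion q with nonzero imaginary part, the conjugacy class {u * q * u⁻¹ : u a nonzero quaternion} equals the set of quaternions with the same real part and the same norm as q. -/
/-!
Conjugation preserves the real part, since `re (u * v) = re (v * u)`, and the multiplicative
norm. Conversely, write `x = r + a` and `q = r + b` with `a`, `b` pure of the same norm. A pure
quaternion squares to minus its squared norm, so `a ^ 2 = b ^ 2`, i.e. `a * (a + b) = (a + b) * b`,
and `u = a + b` conjugates `q` to `x` unless `a = -b`. In that case any nonzero pure `u`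
orthogonal to `b` anticommutes with `b`, hence again `x * u = u * q`.
-/

open scoped Quaternion

namespace Quaternion

section CommRing

variable {R : Type*} [CommRing R]

theorem re_mul_comm (a b : ℍ[R]) : (a * b).re = (b * a).re := by
  simp only [re_mul]
  ring

theorem normSq_eq_re_sq_add_normSq_im (a : ℍ[R]) : normSq a = a.re ^ 2 + normSq a.im := by
  simp only [normSq_def', re_im, imI_im, imJ_im, imK_im]
  ring

theorem im_mul_im_add_im_eq_of_normSq_im_eq {a b : ℍ[R]} (h : normSq a.im = normSq b.im) :
    a.im * (a.im + b.im) = (a.im + b.im) * b.im := by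
  rw [mul_add, add_mul, ← sq, ← sq, im_sq, im_sq, h, add_comm]

theorem exists_eq_mk (r x y z : R) : ∃ u : ℍ[R], u.re = r ∧ u.imI = x ∧ u.imJ = y ∧ u.imK = z :=
  ⟨⟨r, x, y, z⟩, rfl, rfl, rfl, rfl⟩

theorem mul_im_eq_neg_im_mul_of_orthogonal {u b : ℍ[R]} (hu : u.re = 0)
    (h : u.imI * b.imI + u.imJ * b.imJ + u.imK * b.imK = 0) : u * b.im = -(b.im * u) := by
  ext
  · simp only [re_mul, re_neg, re_im, imI_im, imJ_im, imK_im, hu]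
    linear_combination -2 * h
  all_goals simp only [imI_mul, imJ_mul, imK_mul, imI_neg, imJ_neg, imK_neg, re_im, imI_im,
    imJ_im, imK_im, hu]; ring

theorem exists_ne_zero_mul_im_eq_neg_im_mul [Nontrivial R] (b : ℍ[R]) :
    ∃ u ≠ 0, u * b.im = -(b.im * u) := by
  by_cases hb : b.imI = 0 ∧ b.imJ = 0
  · obtain ⟨u, h0, hI, hJ, hK⟩ := exists_eq_mk (0 : R) 1 0 0
    refine ⟨u, ?_, mul_im_eq_neg_im_mul_of_orthogonal h0 ?_⟩
    · rintro rfl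
      exact zero_ne_one hI
    · simp [hI, hJ, hK, hb.1]
  · obtain ⟨u, h0, hI, hJ, hK⟩ := exists_eq_mk (0 : R) b.imJ (-b.imI) 0
    refine ⟨u, ?_, mul_im_eq_neg_im_mul_of_orthogonal h0 ?_⟩
    · rintro rfl
      exact hb ⟨neg_eq_zero.mp hJ.symm, hI.symm⟩
    · rw [hI, hJ, hK]
      ring

theorem exists_ne_zero_im_mul_eq_mul_im [Nontrivial R] {a b : ℍ[R]}
    (h : normSq a.im = normSq b.im) : ∃ u ≠ 0, a.im * u = u * b.im := by
  by_cases hab : a.im + b.im = 0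
  · obtain ⟨u, hu, hub⟩ := exists_ne_zero_mul_im_eq_neg_im_mul b
    refine ⟨u, hu, ?_⟩
    rw [eq_neg_of_add_eq_zero_left hab, neg_mul, hub]
  · exact ⟨a.im + b.im, hab, im_mul_im_add_im_eq_of_normSq_im_eq h⟩

theorem exists_ne_zero_mul_eq_mul_of_re_eq_of_normSq_eq [Nontrivial R] {x q : ℍ[R]}
    (hre : x.re = q.re) (hnorm : normSq x = normSq q) : ∃ u ≠ 0, x * u = u * q := by
  have him : normSq x.im = normSq q.im := by
    rwa [normSq_eq_re_sq_add_normSq_im x, normSq_eq_re_sq_add_normSq_im q, hre, add_right_inj]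
      at hnorm
  obtain ⟨u, hu, hxu⟩ := exists_ne_zero_im_mul_eq_mul_im him
  refine ⟨u, hu, ?_⟩
  calc x * u = x.re * u + x.im * u := by rw [← add_mul, re_add_im]
    _ = u * q.re + u * q.im := by rw [hre, coe_commutes, hxu]
    _ = u * q := by rw [← mul_add, re_add_im]

end CommRing

section Field

variable {R : Type*} [Field R] [LinearOrder R] [IsStrictOrderedRing R]

theorem re_conj {u : ℍ[R]} (hu : u ≠ 0) (q : ℍ[R]) : (u * q * u⁻¹).re = q.re := by
  rw [mul_assoc, re_mul_comm, mul_assoc, inv_mul_cancel₀ hu, mul_one]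

theorem normSq_conj {u : ℍ[R]} (hu : u ≠ 0) (q : ℍ[R]) : normSq (u * q * u⁻¹) = normSq q := by
  rw [map_mul, map_mul, map_inv₀, mul_right_comm, mul_inv_cancel₀ (normSq_ne_zero.mpr hu),
    one_mul]

theorem exists_conj_eq_of_re_eq_of_normSq_eq {x q : ℍ[R]} (hre : x.re = q.re)
    (hnorm : normSq x = normSq q) : ∃ u ≠ 0, x = u * q * u⁻¹ := by
  obtain ⟨u, hu, hxu⟩ := exists_ne_zero_mul_eq_mul_of_re_eq_of_normSq_eq hre hnorm
  exact ⟨u, hu, (eq_mul_inv_iff_mul_eq₀ hu).mpr hxu⟩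

end Field

theorem norm_eq_norm_iff_normSq_eq {a b : ℍ[ℝ]} : ‖a‖ = ‖b‖ ↔ normSq a = normSq b := by
  rw [normSq_eq_norm_mul_self, normSq_eq_norm_mul_self,
    mul_self_inj (norm_nonneg a) (norm_nonneg b)]

end Quaternion

open Quaternion in
theorem quaternion_conjugacy_class_general (q : ℍ[ℝ]) :
    {x : ℍ[ℝ] | ∃ u : ℍ[ℝ], u ≠ 0 ∧ x = u * q * u⁻¹} =
      {x : ℍ[ℝ] | x.re = q.re ∧ ‖x‖ = ‖q‖} := by
  ext x
  simp only [Set.mem_ofPred_eq, norm_eq_norm_iff_normSq_eq]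
  constructor
  · rintro ⟨u, hu, rfl⟩
    exact ⟨re_conj hu q, normSq_conj hu q⟩
  · rintro ⟨hre, hnorm⟩
    exact exists_conj_eq_of_re_eq_of_normSq_eq hre hnorm

theorem quaternion_conjugacy_class (q : ℍ[ℝ]) (hq : q ≠ ((q.re : ℝ) : ℍ[ℝ])) :
    {x : ℍ[ℝ] | ∃ u : ℍ[ℝ], u ≠ 0 ∧ x = u * q * u⁻¹} =
      {x : ℍ[ℝ] | x.re = q.re ∧ ‖x‖ = ‖q‖} :=
  quaternion_conjugacy_class_general q
end

section
/- If all coefficients of a polynomial P over the quaternions lie in the subalgebra ℂ = ℝ⟨i⟩ (spanned by 1 and i), and q₀ is a root of P whose minimal central quadratic does not divide P, then q₀ lies in ℝ⟨1, i⟩. -/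
/-!
Let `c` be the minimal central quadratic of `q₀` and `ℂ = ℝ⟨i⟩`. Lift `P` to the commutative
ring `ℂ[X]` and divide there: `P = Q * c + (a X + b)` with `a, b ∈ ℂ`. The coefficients of `c`
are real, hence central, so evaluation at `q₀` is multiplicative on `Q * c`; as `c(q₀) = 0`
this gives `a q₀ + b = 0`. Since `c ∤ P` the remainder is nonzero, so `a ≠ 0` and
`q₀ = -a⁻¹ b ∈ ℂ`.
-/

open scoped Quaternion IsMulCommutative
open Polynomial

theorem Polynomial.eval₂_modByMonic_map_eq_zero {K S D : Type*} [CommRing K] [CommRing S]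
    [Ring D] [Algebra K S] [Algebra K D] (f : S →ₐ[K] D) {p : K[X]} {x : D}
    (hpx : aeval x p = 0) {P : S[X]} (hPx : eval₂ (f : S →+* D) x P = 0) :
    eval₂ (f : S →+* D) x (P %ₘ p.map (algebraMap K S)) = 0 := by
  set c := p.map (algebraMap K S)
  have hc_central : ∀ k, Commute ((f : S →+* D) (c.coeff k)) x := fun k => by
    simpa [c, coeff_map] using Algebra.commute_algebraMap_left (p.coeff k) x
  have hcx : eval₂ (f : S →+* D) x c = 0 := by
    rwa [eval₂_map, f.comp_algebraMap, ← aeval_def]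
  have hdiv := congrArg (eval₂ (f : S →+* D) x) (mul_comm c (P /ₘ c) ▸ modByMonic_add_div P c)
  rwa [eval₂_add, eval₂_mul_noncomm _ _ hc_central, hcx, mul_zero, add_zero, hPx] at hdiv

section IntegralSubalgebra

variable {K D : Type*} [Field K] [DivisionRing D] [Algebra K D] [Algebra.IsIntegral K D]
  {A : Subalgebra K D}

theorem Subalgebra.mem_of_mul_add_eq_zero {a b x : D} (ha : a ∈ A) (hb : b ∈ A) (ha0 : a ≠ 0)
    (h : a * x + b = 0) : x ∈ A := by
  have hx : x = a⁻¹ * -b := (eq_inv_mul_iff_mul_eq₀ ha0).2 (eq_neg_of_add_eq_zero_left h)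
  rw [hx]
  exact A.mul_mem ((Algebra.IsIntegral.isIntegral a).inv_mem ha) (A.neg_mem hb)

theorem Subalgebra.mem_of_eval₂_eq_zero_of_natDegree_le_one {R : A[X]} (hdeg : R.natDegree ≤ 1)
    (hR : R ≠ 0) {x : D} (hx : eval₂ (A.val : A →+* D) x R = 0) : x ∈ A := by
  rw [eq_X_add_C_of_natDegree_le_one hdeg] at hR hx
  simp only [eval₂_add, eval₂_mul_X, eval₂_C] at hx
  have ha : R.coeff 1 ≠ 0 := by
    rintro ha
    have hb : R.coeff 0 = 0 := by simpa [ha] using hx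
    exact hR (by simp [ha, hb])
  exact mem_of_mul_add_eq_zero (R.coeff 1).2 (R.coeff 0).2 (by simpa using ha) hx

end IntegralSubalgebra

namespace Quaternion

noncomputable def centralQuadratic (q : ℍ[ℝ]) : ℝ[X] := X ^ 2 - C (2 * q.re) * X + C (‖q‖ ^ 2)

theorem centralQuadratic_monic (q : ℍ[ℝ]) : (centralQuadratic q).Monic := by
  unfold centralQuadratic
  monicity!

theorem degree_centralQuadratic (q : ℍ[ℝ]) : (centralQuadratic q).degree = 2 := by
  unfold centralQuadratic
  compute_degree!

theorem aeval_centralQuadratic_self (q : ℍ[ℝ]) : aeval q (centralQuadratic q) = 0 := by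
  have hre : ((2 * q.re : ℝ) : ℍ[ℝ]) = q + star q := (self_add_star' q).symm
  have hnorm : ((‖q‖ ^ 2 : ℝ) : ℍ[ℝ]) = star q * q := by
    rw [star_mul_self, sq, normSq_eq_norm_mul_self]
  rw [centralQuadratic, map_add, map_sub, map_mul, map_pow, aeval_X, aeval_C, aeval_C,
    algebraMap_def, hre, hnorm]
  noncomm_ring

theorem map_centralQuadratic (q : ℍ[ℝ]) : (centralQuadratic q).map (algebraMap ℝ ℍ[ℝ]) =
    X ^ 2 - C ((2 * q.re : ℝ) : ℍ[ℝ]) * X + C ((‖q‖ ^ 2 : ℝ) : ℍ[ℝ]) := by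
  simp [centralQuadratic, algebraMap_def]

end Quaternion

theorem alignment_to_complex_subalgebra
    (P : Polynomial ℍ[ℝ])
    (hcoeff : ∀ n, P.coeff n ∈ Algebra.adjoin ℝ ({⟨0, 1, 0, 0⟩} : Set ℍ[ℝ]))
    (q₀ : ℍ[ℝ]) (hroot : P.eval q₀ = 0)
    (hnodvd : ¬ (X ^ 2 - C (((2 * q₀.re : ℝ)) : ℍ[ℝ]) * X + C ((‖q₀‖ ^ 2 : ℝ) : ℍ[ℝ])) ∣ P) :
    q₀ ∈ Algebra.adjoin ℝ ({⟨0, 1, 0, 0⟩} : Set ℍ[ℝ]) := by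
  set 𝔸 := Algebra.adjoin ℝ ({⟨0, 1, 0, 0⟩} : Set ℍ[ℝ])
  have : IsMulCommutative 𝔸 := Algebra.isMulCommutative_adjoin_singleton ℝ _
  obtain ⟨P', rfl⟩ : ∃ P' : 𝔸[X], P'.map (𝔸.val : 𝔸 →+* ℍ[ℝ]) = P :=
    (lifts_iff_coeff_lifts P).2 fun n => ⟨⟨_, hcoeff n⟩, rfl⟩
  have hmonic := q₀.centralQuadratic_monic
  set c := q₀.centralQuadratic.map (algebraMap ℝ 𝔸)
  have hR0 : P' %ₘ c ≠ 0 := by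
    rw [Ne, modByMonic_eq_zero_iff_dvd (hmonic.map _)]
    intro hdvd
    have := Polynomial.map_dvd (𝔸.val : 𝔸 →+* ℍ[ℝ]) hdvd
    rw [map_map, 𝔸.val.comp_algebraMap, Quaternion.map_centralQuadratic] at this
    exact hnodvd this
  have hdeg : (P' %ₘ c).natDegree ≤ 1 := by
    have hlt := degree_modByMonic_lt P' (hmonic.map (algebraMap ℝ 𝔸))
    rw [hmonic.degree_map, Quaternion.degree_centralQuadratic, ← Nat.cast_ofNat,
      ← natDegree_lt_iff_degree_lt hR0] at hlt
    omega
  refine Subalgebra.mem_of_eval₂_eq_zero_of_natDegree_le_one hdeg hR0 ?_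
  exact eval₂_modByMonic_map_eq_zero 𝔸.val q₀.aeval_centralQuadratic_self
    (by rwa [eval_map] at hroot)
end
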